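/- Let n ≥ 2 and let p, q : ℝ → ℝⁿ be differentiable. Then the Sutcliffe matrices built from p(s), q(s) satisfy Tᵢ(s)ᴴ = −Tᵢ(s) for i = 1,2,3 and every s; moreover they satisfy Nahm's equations dT₁/ds = [T₂,T₃], dT₂/ds = [T₃,T₁], dT₃/ds = [T₁,T₂] at s if and only if the affine Toda equations hold at s: for every index i (mod n), q̇ᵢ − q̇_{i+1} = pᵢ − p_{i+1} and ṗᵢ = exp(qᵢ − q_{i+1}) − exp(q_{i−1} − qᵢ). -/

import Mathlib

/-!
Write `S = T₁ + iT₂`, a weighted cyclic shift with real weights `aᵢ = exp((qᵢ − q_{i+1})/2)`,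
and `D = diag p`, so that `T₁ − iT₂ = −Sᵀ` and `T₃ = −(i/2) D`. Since `S` is real, `Sᴴ = Sᵀ`,
which makes all three matrices skew-Hermitian. The first two Nahm equations say that
`E = Ṡ − ½[D, S]` is symmetric and antisymmetric respectively, so together they amount to
`Ṡ = ½[D, S]`; both sides are weighted cyclic shifts, and comparing weights gives
`q̇ᵢ − q̇_{i+1} = pᵢ − p_{i+1}`. For the third, `[T₁, T₂] = −(i/2)(SSᵀ − SᵀS)` with
`SSᵀ = diag(aᵢ²)` and `SᵀS = diag(a_{i−1}²)`.
-/

open Matrix Complex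

attribute [local instance] Matrix.normedAddCommGroup Matrix.normedSpace

/-- The Sutcliffe matrix `T₁+iT₂`: entries `exp((qᵢ − q_{i+1})/2)` on the cyclic
superdiagonal `j = i+1 (mod n)` and `0` elsewhere. -/
noncomputable def sutTplus (n : ℕ) [NeZero n] (q : Fin n → ℝ) :
    Matrix (Fin n) (Fin n) ℂ :=
  Matrix.of fun i j => if j = i + 1 then (Real.exp ((q i - q (i + 1)) / 2) : ℂ) else 0

/-- The Sutcliffe matrix `T₁−iT₂ = −(T₁+iT₂)ᵀ`. -/
noncomputable def sutTminus (n : ℕ) [NeZero n] (q : Fin n → ℝ) :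
    Matrix (Fin n) (Fin n) ℂ :=
  -(sutTplus n q)ᵀ

/-- The Sutcliffe matrix `T₁ = ((T₁+iT₂) + (T₁−iT₂))/2`. -/
noncomputable def sutT1 (n : ℕ) [NeZero n] (q : Fin n → ℝ) :
    Matrix (Fin n) (Fin n) ℂ :=
  (1 / 2 : ℂ) • (sutTplus n q + sutTminus n q)

/-- The Sutcliffe matrix `T₂ = ((T₁+iT₂) − (T₁−iT₂))/(2i)`. -/
noncomputable def sutT2 (n : ℕ) [NeZero n] (q : Fin n → ℝ) :
    Matrix (Fin n) (Fin n) ℂ :=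
  (1 / (2 * Complex.I) : ℂ) • (sutTplus n q - sutTminus n q)

/-- The Sutcliffe matrix `T₃ = −(i/2)·diag(p₁,…,pₙ)`. -/
noncomputable def sutT3 (n : ℕ) [NeZero n] (p : Fin n → ℝ) :
    Matrix (Fin n) (Fin n) ℂ :=
  (-(Complex.I / 2)) • Matrix.diagonal fun i => (p i : ℂ)

section CyclicShift

variable {R : Type*} {n : ℕ} [NeZero n]

def cyclicShift [Zero R] (a : Fin n → R) : Matrix (Fin n) (Fin n) R :=
  of fun i j => if j = i + 1 then a i else 0

theorem cyclicShift_apply_add_one [Zero R] (a : Fin n → R) (i : Fin n) :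
    cyclicShift a i (i + 1) = a i := if_pos rfl

theorem cyclicShift_injective [Zero R] :
    Function.Injective (cyclicShift : (Fin n → R) → Matrix (Fin n) (Fin n) R) :=
  fun a b h => funext fun i => by
    simpa only [cyclicShift_apply_add_one] using congr_fun₂ h i (i + 1)

theorem smul_cyclicShift [Zero R] {S : Type*} [SMulZeroClass S R] (c : S) (a : Fin n → R) :
    c • cyclicShift a = cyclicShift (c • a) := by
  ext i j
  simp only [cyclicShift, Matrix.smul_apply, of_apply, smul_ite, smul_zero, Pi.smul_apply]

theorem conjTranspose_cyclicShift [AddMonoid R] [StarAddMonoid R] (a : Fin n → R) :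
    (cyclicShift a)ᴴ = (cyclicShift (star a))ᵀ := by
  ext i j
  simp only [cyclicShift, conjTranspose_apply, transpose_apply, of_apply]
  split_ifs <;> simp_all

theorem diagonal_mul_cyclicShift_sub [CommRing R] (d a : Fin n → R) :
    diagonal d * cyclicShift a - cyclicShift a * diagonal d =
      cyclicShift fun i => (d i - d (i + 1)) * a i := by
  ext i j
  simp only [cyclicShift, diagonal_mul, mul_diagonal, Matrix.sub_apply, of_apply]
  split_ifs with h
  · rw [h, sub_mul, mul_comm (a i)]
  · rw [mul_zero, zero_mul, sub_zero]

theorem cyclicShift_mul_transpose_cyclicShift [Semiring R] (a b : Fin n → R) :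
    cyclicShift a * (cyclicShift b)ᵀ = diagonal fun i => a i * b i := by
  ext i j
  simp only [cyclicShift, mul_apply, transpose_apply, of_apply, ite_mul, zero_mul, mul_ite,
    mul_zero, Finset.sum_ite_eq', Finset.mem_univ, if_true, diagonal_apply, add_left_inj]
  split_ifs with h <;> simp_all

theorem transpose_cyclicShift_mul_cyclicShift [Semiring R] (a b : Fin n → R) :
    (cyclicShift a)ᵀ * cyclicShift b = diagonal fun i => a (i - 1) * b (i - 1) := by
  ext i j
  simp only [cyclicShift, mul_apply, transpose_apply, of_apply, ite_mul, zero_mul, mul_ite,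
    mul_zero]
  have hshift (k : Fin n) : j = k + 1 ↔ k = j - 1 := eq_comm.trans eq_sub_iff_add_eq.symm
  simp only [hshift, Finset.sum_ite_eq', Finset.mem_univ, if_true, sub_add_cancel, diagonal_apply]
  split_ifs with h <;> simp_all

end CyclicShift

section Derivatives

variable {𝕜 E : Type*} [NontriviallyNormedField 𝕜] [NormedAddCommGroup E] [NormedSpace 𝕜 E]
  {ι κ : Type*} {f : 𝕜 → Matrix ι κ E} {f' : Matrix ι κ E} {x : 𝕜}

theorem hasDerivAt_matrix_iff [Fintype ι] [Fintype κ] :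
    HasDerivAt f f' x ↔ ∀ i j, HasDerivAt (fun t => f t i j) (f' i j) x :=
  hasDerivAt_pi.trans <| forall_congr' fun _ => hasDerivAt_pi

theorem HasDerivAt.matrix_transpose [Fintype ι] [Fintype κ] (h : HasDerivAt f f' x) :
    HasDerivAt (fun t => (f t)ᵀ) f'ᵀ x :=
  hasDerivAt_matrix_iff.2 fun i j => hasDerivAt_matrix_iff.1 h j i

theorem HasDerivAt.hasDerivAt_iff_eq [Fintype ι] [Fintype κ] (h : HasDerivAt f f' x)
    {g' : Matrix ι κ E} : HasDerivAt f g' x ↔ g' = f' :=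
  ⟨fun h' => h'.unique h, fun e => e ▸ h⟩

theorem hasDerivAt_cyclicShift {n : ℕ} [NeZero n] {a : 𝕜 → Fin n → E} {a' : Fin n → E}
    (h : ∀ i, HasDerivAt (fun t => a t i) (a' i) x) :
    HasDerivAt (fun t => cyclicShift (a t)) (cyclicShift a') x := by
  refine hasDerivAt_matrix_iff.2 fun i j => ?_
  simp only [cyclicShift, of_apply]
  split_ifs
  · exact h i
  · exact hasDerivAt_const x 0

theorem hasDerivAt_diagonal {n : ℕ} {a : 𝕜 → Fin n → E} {a' : Fin n → E}
    (h : ∀ i, HasDerivAt (fun t => a t i) (a' i) x) :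
    HasDerivAt (fun t => diagonal (a t)) (diagonal a') x := by
  refine hasDerivAt_matrix_iff.2 fun i j => ?_
  simp only [diagonal_apply]
  split_ifs with hij
  · exact hij ▸ h i
  · exact hasDerivAt_const x 0

end Derivatives

theorem one_div_two_mul_I : 1 / (2 * I) = -(I / 2) := by
  rw [one_div, mul_inv, inv_I]
  ring

section Sutcliffe

variable {n : ℕ} [NeZero n]

theorem sutTplus_eq_cyclicShift (q : Fin n → ℝ) :
    sutTplus n q = cyclicShift fun i => (Real.exp ((q i - q (i + 1)) / 2) : ℂ) := rfl

theorem conjTranspose_sutTplus (q : Fin n → ℝ) : (sutTplus n q)ᴴ = (sutTplus n q)ᵀ := by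
  rw [sutTplus_eq_cyclicShift, conjTranspose_cyclicShift]
  congr 2
  ext i
  exact Complex.conj_ofReal _

theorem conjTranspose_sutT1 (q : Fin n → ℝ) : (sutT1 n q)ᴴ = -sutT1 n q := by
  rw [sutT1, sutTminus, conjTranspose_smul, conjTranspose_add, conjTranspose_neg,
    conjTranspose_transpose_eq_transpose_conjTranspose, conjTranspose_sutTplus, transpose_transpose,
    show star (1 / 2 : ℂ) = 1 / 2 by simp]
  module

theorem conjTranspose_sutT2 (q : Fin n → ℝ) : (sutT2 n q)ᴴ = -sutT2 n q := by
  rw [sutT2, sutTminus, conjTranspose_smul, conjTranspose_sub, conjTranspose_neg,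
    conjTranspose_transpose_eq_transpose_conjTranspose, conjTranspose_sutTplus, transpose_transpose,
    show star (1 / (2 * I)) = -(1 / (2 * I)) by simp]
  module

theorem conjTranspose_sutT3 (p : Fin n → ℝ) : (sutT3 n p)ᴴ = -sutT3 n p := by
  rw [sutT3, conjTranspose_smul, diagonal_conjTranspose]
  have hp : star (fun i => (p i : ℂ)) = fun i => (p i : ℂ) := funext fun i => Complex.conj_ofReal _
  have hc : star (-(I / 2)) = -(-(I / 2)) := by simp [neg_div]
  rw [hp, hc, neg_smul]

theorem sutT_nahm_first_two_iff (p q : Fin n → ℝ) (S' : Matrix (Fin n) (Fin n) ℂ) :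
    (sutT2 n q * sutT3 n p - sutT3 n p * sutT2 n q = (1 / 2 : ℂ) • (S' + -S'ᵀ) ∧
      sutT3 n p * sutT1 n q - sutT1 n q * sutT3 n p = (1 / (2 * I)) • (S' - -S'ᵀ)) ↔
      S' = (1 / 2 : ℂ) • (diagonal (fun i => (p i : ℂ)) * sutTplus n q -
        sutTplus n q * diagonal fun i => (p i : ℂ)) := by
  set S := sutTplus n q
  set D := diagonal fun i => (p i : ℂ)
  set C := D * S - S * D
  have hD : Dᵀ = D := diagonal_transpose _
  have h23 : sutT2 n q * sutT3 n p - sutT3 n p * sutT2 n q = (1 / 4 : ℂ) • (C - Cᵀ) := by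
    simp only [C, sutT2, sutT3, sutTminus, one_div_two_mul_I, transpose_sub, transpose_mul, hD,
      Matrix.smul_mul, Matrix.mul_smul, Matrix.add_mul, Matrix.mul_add, sub_neg_eq_add]
    match_scalars <;> ring_nf <;> (try simp only [I_sq]) <;> ring
  have h31 : sutT3 n p * sutT1 n q - sutT1 n q * sutT3 n p = (-(I / 4)) • (C + Cᵀ) := by
    simp only [C, sutT1, sutT3, sutTminus, transpose_sub, transpose_mul, hD,
      Matrix.smul_mul, Matrix.mul_smul, Matrix.add_mul, Matrix.mul_add, Matrix.mul_neg,
      Matrix.neg_mul]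
    module
  rw [h23, h31, one_div_two_mul_I]
  constructor
  · rintro ⟨h1, h2⟩
    linear_combination (norm := skip) -h1 - I • h2
    match_scalars <;> ring_nf <;> (try simp only [I_sq]) <;> ring
  · rintro rfl
    constructor <;> rw [transpose_smul] <;> module

theorem sutTplus_deriv_eq_half_commutator_iff (p q q' : Fin n → ℝ) :
    (cyclicShift fun i =>
        ((Real.exp ((q i - q (i + 1)) / 2) * ((q' i - q' (i + 1)) / 2) : ℝ) : ℂ)) =
        (1 / 2 : ℂ) • (diagonal (fun i => (p i : ℂ)) * sutTplus n q -
          sutTplus n q * diagonal fun i => (p i : ℂ)) ↔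
      ∀ i, q' i - q' (i + 1) = p i - p (i + 1) := by
  rw [sutTplus_eq_cyclicShift, diagonal_mul_cyclicShift_sub, smul_cyclicShift,
    cyclicShift_injective.eq_iff, funext_iff]
  refine forall_congr' fun i => ?_
  have hexp := (Real.exp_pos ((q i - q (i + 1)) / 2)).ne'
  rw [Pi.smul_apply, smul_eq_mul, show (1 / 2 : ℂ) = ((1 / 2 : ℝ) : ℂ) by norm_num]
  norm_cast
  rw [show 1 / 2 * ((p i - p (i + 1)) * Real.exp ((q i - q (i + 1)) / 2)) =
      Real.exp ((q i - q (i + 1)) / 2) * ((p i - p (i + 1)) / 2) by ring,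
    mul_right_inj' hexp, div_left_inj' two_ne_zero]

theorem commutator_sutT1_sutT2 (q : Fin n → ℝ) :
    sutT1 n q * sutT2 n q - sutT2 n q * sutT1 n q =
      (-(I / 2)) • diagonal fun i =>
        ((Real.exp (q i - q (i + 1)) - Real.exp (q (i - 1) - q i) : ℝ) : ℂ) := by
  have hcomm : sutT1 n q * sutT2 n q - sutT2 n q * sutT1 n q =
      (-(I / 2)) • (sutTplus n q * (sutTplus n q)ᵀ - (sutTplus n q)ᵀ * sutTplus n q) := by
    simp only [sutT1, sutT2, sutTminus, one_div_two_mul_I, Matrix.smul_mul, Matrix.mul_smul,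
      Matrix.add_mul, Matrix.mul_add, Matrix.sub_mul, Matrix.mul_sub, Matrix.mul_neg,
      Matrix.neg_mul]
    module
  rw [hcomm, sutTplus_eq_cyclicShift, cyclicShift_mul_transpose_cyclicShift,
    transpose_cyclicShift_mul_cyclicShift, diagonal_sub]
  congr 2
  ext i
  simp only [sub_add_cancel, ← Complex.ofReal_mul, ← Real.exp_add, add_halves, Complex.ofReal_sub]

variable {q : ℝ → Fin n → ℝ} {S' : Matrix (Fin n) (Fin n) ℂ} {s : ℝ}

theorem hasDerivAt_sutTplus {q' : Fin n → ℝ}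
    (hq : ∀ i, HasDerivAt (fun t => q t i) (q' i) s) :
    HasDerivAt (fun t => sutTplus n (q t))
      (cyclicShift fun i =>
        ((Real.exp ((q s i - q s (i + 1)) / 2) * ((q' i - q' (i + 1)) / 2) : ℝ) : ℂ)) s :=
  hasDerivAt_cyclicShift fun i => (((hq i).sub (hq (i + 1))).div_const 2).exp.ofReal_comp

theorem HasDerivAt.sutT1 (h : HasDerivAt (fun t => sutTplus n (q t)) S' s) :
    HasDerivAt (fun t => sutT1 n (q t)) ((1 / 2 : ℂ) • (S' + -S'ᵀ)) s := by
  unfold _root_.sutT1 sutTminus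
  exact (h.add h.matrix_transpose.neg).const_smul (1 / 2 : ℂ)

theorem HasDerivAt.sutT2 (h : HasDerivAt (fun t => sutTplus n (q t)) S' s) :
    HasDerivAt (fun t => sutT2 n (q t)) ((1 / (2 * I)) • (S' - -S'ᵀ)) s := by
  unfold _root_.sutT2 sutTminus
  exact (h.sub h.matrix_transpose.neg).const_smul (1 / (2 * I))

theorem hasDerivAt_sutT3 {p : ℝ → Fin n → ℝ} {p' : Fin n → ℝ}
    (hp : ∀ i, HasDerivAt (fun t => p t i) (p' i) s) :
    HasDerivAt (fun t => sutT3 n (p t)) ((-(I / 2)) • diagonal fun i => (p' i : ℂ)) s := by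
  unfold sutT3
  exact (hasDerivAt_diagonal fun i => (hp i).ofReal_comp).const_smul (-(I / 2))

end Sutcliffe

theorem stmt6_general (n : ℕ) [NeZero n]
    (p q p' q' : ℝ → Fin n → ℝ)
    (hp : ∀ (i : Fin n) (s : ℝ), HasDerivAt (fun t => p t i) (p' s i) s)
    (hq : ∀ (i : Fin n) (s : ℝ), HasDerivAt (fun t => q t i) (q' s i) s) :
    (∀ s : ℝ,
      (sutT1 n (q s))ᴴ = -sutT1 n (q s) ∧
      (sutT2 n (q s))ᴴ = -sutT2 n (q s) ∧
      (sutT3 n (p s))ᴴ = -sutT3 n (p s)) ∧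
    (∀ s : ℝ,
      (HasDerivAt (fun t => sutT1 n (q t))
          (sutT2 n (q s) * sutT3 n (p s) - sutT3 n (p s) * sutT2 n (q s)) s ∧
       HasDerivAt (fun t => sutT2 n (q t))
          (sutT3 n (p s) * sutT1 n (q s) - sutT1 n (q s) * sutT3 n (p s)) s ∧
       HasDerivAt (fun t => sutT3 n (p t))
          (sutT1 n (q s) * sutT2 n (q s) - sutT2 n (q s) * sutT1 n (q s)) s) ↔
      (∀ i : Fin n,
        q' s i - q' s (i + 1) = p s i - p s (i + 1) ∧
        p' s i = Real.exp (q s i - q s (i + 1)) - Real.exp (q s (i - 1) - q s i))) := by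
  refine ⟨fun s => ⟨conjTranspose_sutT1 _, conjTranspose_sutT2 _, conjTranspose_sutT3 _⟩,
    fun s => ?_⟩
  have hS := hasDerivAt_sutTplus fun i => hq i s
  have hI : -(I / 2) ≠ 0 := by simp [I_ne_zero]
  rw [hS.sutT1.hasDerivAt_iff_eq, hS.sutT2.hasDerivAt_iff_eq,
    (hasDerivAt_sutT3 fun i => hp i s).hasDerivAt_iff_eq, ← and_assoc, sutT_nahm_first_two_iff,
    sutTplus_deriv_eq_half_commutator_iff, commutator_sutT1_sutT2, smul_right_inj hI,
    diagonal_injective.eq_iff, funext_iff, ← forall_and]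
  simp only [Complex.ofReal_inj, eq_comm]

/-- The Sutcliffe matrices built from differentiable `p, q : ℝ → ℝⁿ` are skew-Hermitian,
and they satisfy Nahm's equations at `s` iff the affine Toda equations hold at `s`. -/
theorem stmt6 (n : ℕ) [NeZero n] (hn : 2 ≤ n)
    (p q p' q' : ℝ → Fin n → ℝ)
    (hp : ∀ (i : Fin n) (s : ℝ), HasDerivAt (fun t => p t i) (p' s i) s)
    (hq : ∀ (i : Fin n) (s : ℝ), HasDerivAt (fun t => q t i) (q' s i) s) :
    (∀ s : ℝ,
      (sutT1 n (q s))ᴴ = -sutT1 n (q s) ∧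
      (sutT2 n (q s))ᴴ = -sutT2 n (q s) ∧
      (sutT3 n (p s))ᴴ = -sutT3 n (p s)) ∧
    (∀ s : ℝ,
      (HasDerivAt (fun t => sutT1 n (q t))
          (sutT2 n (q s) * sutT3 n (p s) - sutT3 n (p s) * sutT2 n (q s)) s ∧
       HasDerivAt (fun t => sutT2 n (q t))
          (sutT3 n (p s) * sutT1 n (q s) - sutT1 n (q s) * sutT3 n (p s)) s ∧
       HasDerivAt (fun t => sutT3 n (p t))
          (sutT1 n (q s) * sutT2 n (q s) - sutT2 n (q s) * sutT1 n (q s)) s) ↔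
      (∀ i : Fin n,
        q' s i - q' s (i + 1) = p s i - p s (i + 1) ∧
        p' s i = Real.exp (q s i - q s (i + 1)) - Real.exp (q s (i - 1) - q s i))) :=
  stmt6_general n p q p' q' hp hq
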